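/- Let V be a vector space over a field 𝕂 of characteristic 0. Then (M(V), [·,·]^Δ) is a 1-graded (ℤ-graded) Lie algebra: the bracket satisfies [M^{k₁}(V), M^{k₂}(V)] ⊆ M^{k₁+k₂}(V), graded anticommutativity [K₁,K₂]^Δ = −(−1)^{k₁k₂}[K₂,K₁]^Δ, and the graded Jacobi identity [K₁,[K₂,K₃]^Δ]^Δ = [[K₁,K₂]^Δ,K₃]^Δ + (−1)^{k₁k₂}[K₂,[K₁,K₃]^Δ]^Δ for Kᵢ ∈ M^{kᵢ}(V). -/
import Mathlib
set_option linter.unusedSectionVars false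
set_option maxHeartbeats 1000000


namespace NR

open Finset

/-- The sign `(-1)^z` for an integer `z`. -/
def sgn (z : ℤ) : ℤ := (-1) ^ z.natAbs

/-- Shift a sequence: `shiftSeq f i = (f i, f (i+1), …)`. -/
def shiftSeq {β : Type*} (f : ℕ → β) (i : ℕ) : ℕ → β := fun m => f (m + i)

/-- Insert the value `c` at slot `i` of the sequence `f`, where `c` replaces
`a` consecutive entries `f i, …, f (i+a-1)` of `f`. -/
def insSeq {β : Type*} (a i : ℕ) (c : β) (f : ℕ → β) : ℕ → β :=
  fun l => if l < i then f l else if l = i then c else f (l + a - 1)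

variable {𝕂 : Type} [Field 𝕂] [CharZero 𝕂] {V : Type} [AddCommGroup V] [Module 𝕂 V]

/-- `K` represents an element of `M^{a-1}(V)`, i.e. an `a`-linear map `V × ⋯ × V → V`,
coded as a function on sequences which depends only on the first `a` entries and is
`𝕂`-multilinear in them.  (For `a = k+1` this is the space `M^k(V)` of `(k+1)`-linear
maps; `M^{-1}(V) = V` corresponds to `a = 0`, i.e. constants.) -/
def IsML0 (𝕂 : Type) [Field 𝕂] {V : Type} [AddCommGroup V] [Module 𝕂 V]
    (a : ℕ) (K : (ℕ → V) → V) : Prop :=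
  (∀ X X', (∀ i, i < a → X i = X' i) → K X = K X') ∧
  (∀ X i, i < a →
    (∀ u v : V, K (Function.update X i (u + v))
        = K (Function.update X i u) + K (Function.update X i v)) ∧
    (∀ (r : 𝕂) (u : V), K (Function.update X i (r • u)) = r • K (Function.update X i u)))

/-- `(j(K₁)K₂)(X₀,…,X_{k₁+k₂}) = ∑ᵢ (−1)^{k₁ i} K₂(X₀,…,K₁(X_i,…,X_{i+k₁}),…,X_{k₁+k₂})`;
here `K₁` has arity `a₁ = k₁+1` and `K₂` arity `a₂ = k₂+1`. -/
def jop0 {V : Type} [AddCommGroup V] (a₁ a₂ : ℕ) (K₁ K₂ : (ℕ → V) → V) : (ℕ → V) → V :=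
  fun X => ∑ i ∈ Finset.range a₂,
    sgn (((a₁ : ℤ) - 1) * (i : ℤ)) • K₂ (insSeq a₁ i (K₁ (shiftSeq X i)) X)

/-- The bracket `[K₁,K₂]^Δ = j(K₁)K₂ − (−1)^{k₁k₂} j(K₂)K₁`. -/
def brD0 {V : Type} [AddCommGroup V] (a₁ a₂ : ℕ) (K₁ K₂ : (ℕ → V) → V) : (ℕ → V) → V :=
  fun X => jop0 a₁ a₂ K₁ K₂ X
    - sgn (((a₁ : ℤ) - 1) * ((a₂ : ℤ) - 1)) • jop0 a₂ a₁ K₂ K₁ X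

lemma sgn_eq (z : ℤ) : sgn z = if Even z then 1 else -1 := by
  unfold sgn
  rcases Int.even_or_odd z with h | h
  · rw [if_pos h, (Int.natAbs_even.mpr h).neg_one_pow]
  · rw [if_neg (Int.not_even_iff_odd.mpr h), (Int.natAbs_odd.mpr h).neg_one_pow]

lemma sgn_add (x y : ℤ) : sgn (x + y) = sgn x * sgn y := by
  rw [sgn_eq, sgn_eq, sgn_eq]
  by_cases hx : Even x <;> by_cases hy : Even y
  · rw [if_pos (Int.even_add.mpr (iff_of_true hx hy)), if_pos hx, if_pos hy]; ring
  · rw [if_neg (fun h => hy ((Int.even_add.mp h).mp hx)), if_pos hx, if_neg hy]; ring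
  · rw [if_neg (fun h => hx ((Int.even_add.mp h).mpr hy)), if_neg hx, if_pos hy]; ring
  · rw [if_pos (Int.even_add.mpr (iff_of_false hx hy)), if_neg hx, if_neg hy]; ring

lemma sgn_mul_self (x : ℤ) : sgn x * sgn x = 1 := by
  rw [sgn_eq]; by_cases h : Even x <;> simp [h]

lemma sgn_add_two_mul (y c : ℤ) : sgn (y + 2 * c) = sgn y := by
  rw [sgn_eq, sgn_eq]
  have h : Even (y + 2 * c) ↔ Even y := by
    constructor
    · intro h; have := h.sub (even_two_mul c); simpa using this
    · intro h; exact h.add (even_two_mul c)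
  by_cases hy : Even y
  · rw [if_pos (h.mpr hy), if_pos hy]
  · rw [if_neg (fun hh => hy (h.mp hh)), if_neg hy]

lemma sgn_congr {x y : ℤ} (c : ℤ) (h : x = y + 2 * c) : sgn x = sgn y := by
  rw [h, sgn_add_two_mul]



lemma insSeq_lt {β : Type*} {a i l : ℕ} {c : β} {f : ℕ → β} (h : l < i) :
    insSeq a i c f l = f l := by simp [insSeq, h]
lemma insSeq_self {β : Type*} (a i : ℕ) (c : β) (f : ℕ → β) :
    insSeq a i c f i = c := by simp [insSeq]
lemma insSeq_gt {β : Type*} {a i l : ℕ} {c : β} {f : ℕ → β} (h : i < l) :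
    insSeq a i c f l = f (l + a - 1) := by
  have h1 : ¬ l < i := by omega
  have h2 : l ≠ i := by omega
  simp [insSeq, h1, h2]
lemma insSeq_update {β : Type*} (a i : ℕ) (c d : β) (f : ℕ → β) :
    Function.update (insSeq a i d f) i c = insSeq a i c f := by
  funext l
  rcases eq_or_ne l i with rfl | h
  · rw [Function.update_self, insSeq_self]
  · rw [Function.update_of_ne h]
    rcases lt_or_gt_of_ne h with h' | h'
    · rw [insSeq_lt h', insSeq_lt h']
    · rw [insSeq_gt h', insSeq_gt h']

lemma shiftSeq_shiftSeq {β : Type*} (f : ℕ → β) (l r : ℕ) :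
    shiftSeq (shiftSeq f l) r = shiftSeq f (r + l) := by
  funext m; show f (m + r + l) = f (m + (r + l)); congr 1; omega

lemma shift_ins_ge {β : Type*} {l i : ℕ} (h : l ≤ i) (a : ℕ) (c : β) (f : ℕ → β) :
    shiftSeq (insSeq a i c f) l = insSeq a (i - l) c (shiftSeq f l) := by
  funext m
  show insSeq a i c f (m + l) = insSeq a (i - l) c (shiftSeq f l) m
  rcases lt_trichotomy (m + l) i with h' | h' | h'
  · rw [insSeq_lt h', insSeq_lt (show m < i - l by omega)]; rfl
  · rw [h', insSeq_self, show m = i - l by omega, insSeq_self]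
  · rw [insSeq_gt h', insSeq_gt (show i - l < m by omega)]
    show f (m + l + a - 1) = f (m + a - 1 + l); congr 1; omega

/-- inserting at `l+r` (inside the block consumed by an `a₂`-ary insertion at `l`,
`r < a₂`) and then inserting at `l`, only the outer insertion survives. -/
lemma ins_ins_mid {β : Type*} {r a₂ : ℕ} (hr : r < a₂) (a₁ l : ℕ) (c d : β) (f : ℕ → β) :
    insSeq a₂ l c (insSeq a₁ (l + r) d f) = insSeq (a₁ + a₂ - 1) l c f := by
  funext j
  rcases lt_trichotomy j l with h' | rfl | h'
  · rw [insSeq_lt h', insSeq_lt h', insSeq_lt (show j < l + r by omega)]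
  · rw [insSeq_self, insSeq_self]
  · rw [insSeq_gt h', insSeq_gt h', insSeq_gt (show l + r < j + a₂ - 1 by omega)]
    congr 1; omega

/-- two insertions at disjoint positions commute -/
lemma ins_ins_disjoint {β : Type*} {i l : ℕ} (hil : i < l) (a₁ a₂ : ℕ) (c d : β)
    (f : ℕ → β) :
    insSeq a₂ l c (insSeq a₁ i d f) = insSeq a₁ i d (insSeq a₂ (l + a₁ - 1) c f) := by
  funext j
  rcases lt_trichotomy j i with h' | rfl | h'
  · rw [insSeq_lt (show j < l by omega), insSeq_lt h', insSeq_lt h',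
      insSeq_lt (show j < l + a₁ - 1 by omega)]
  · rw [insSeq_lt hil, insSeq_self, insSeq_self]
  · rcases lt_trichotomy j l with h'' | rfl | h''
    · rw [insSeq_lt h'', insSeq_gt h', insSeq_gt h',
        insSeq_lt (show j + a₁ - 1 < l + a₁ - 1 by omega)]
    · rw [insSeq_self, insSeq_gt h', insSeq_self]
    · rw [insSeq_gt h'', insSeq_gt (show i < j + a₂ - 1 by omega),
        insSeq_gt h', insSeq_gt (show l + a₁ - 1 < j + a₁ - 1 by omega)]
      congr 1; omega

/-! ### multilinearity infrastructure -/

def mlHom {a : ℕ} {K : (ℕ → V) → V} (h : IsML0 𝕂 a K) (X : ℕ → V) {i : ℕ} (hi : i < a) :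
    V →+ V where
  toFun u := K (Function.update X i u)
  map_zero' := by
    have h0 := (h.2 X i hi).1 0 0
    rw [add_zero] at h0
    exact add_eq_left.mp h0.symm
  map_add' u v := (h.2 X i hi).1 u v

lemma mlHom_apply {a : ℕ} {K : (ℕ → V) → V} (h : IsML0 𝕂 a K) (X : ℕ → V) {i : ℕ}
    (hi : i < a) (u : V) : mlHom h X hi u = K (Function.update X i u) := rfl

lemma ml_insSeq {a b i : ℕ} {K : (ℕ → V) → V} (h : IsML0 𝕂 a K) (X : ℕ → V)
    (hi : i < a) (u : V) :
    K (insSeq b i u X) = mlHom h (insSeq b i 0 X) hi u := by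
  rw [mlHom_apply, insSeq_update]

/-! ### jop0 linearity -/

lemma jop0_zero_right (a₁ a₂ : ℕ) (K₁ : (ℕ → V) → V) :
    jop0 a₁ a₂ K₁ (fun _ => (0 : V)) = fun _ => 0 := by
  funext X; simp [jop0]

lemma jop0_zero_left {a₂ : ℕ} {K₂ : (ℕ → V) → V} (h₂ : IsML0 𝕂 a₂ K₂) (a₁ : ℕ) :
    jop0 a₁ a₂ (fun _ => (0 : V)) K₂ = fun _ => 0 := by
  funext X
  unfold jop0
  refine Finset.sum_eq_zero fun i hi => ?_
  rw [ml_insSeq h₂ X (mem_range.mp hi), map_zero, smul_zero]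

lemma jop0_sub_smul_right (a₁ a₂ : ℕ) (K₁ F G : (ℕ → V) → V) (c : ℤ) (X : ℕ → V) :
    jop0 a₁ a₂ K₁ (fun Y => F Y - c • G Y) X
      = jop0 a₁ a₂ K₁ F X - c • jop0 a₁ a₂ K₁ G X := by
  unfold jop0
  rw [Finset.smul_sum, ← Finset.sum_sub_distrib]
  refine Finset.sum_congr rfl fun i _ => ?_
  rw [smul_sub, smul_comm]

lemma jop0_sub_smul_left {a₂ : ℕ} {K₂ : (ℕ → V) → V} (h₂ : IsML0 𝕂 a₂ K₂)
    (a₁ : ℕ) (F G : (ℕ → V) → V) (c : ℤ) (X : ℕ → V) :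
    jop0 a₁ a₂ (fun Y => F Y - c • G Y) K₂ X
      = jop0 a₁ a₂ F K₂ X - c • jop0 a₁ a₂ G K₂ X := by
  unfold jop0
  rw [Finset.smul_sum, ← Finset.sum_sub_distrib]
  refine Finset.sum_congr rfl fun i hi => ?_
  have hi' := mem_range.mp hi
  rw [ml_insSeq h₂ X hi', ml_insSeq h₂ X hi', ml_insSeq h₂ X hi',
    map_sub, map_zsmul, smul_sub, smul_comm]

/-! ### the double-insertion summand -/

def dbl {V : Type} [AddCommGroup V] (a₁ a₂ : ℕ) (K₁ K₂ K₃ : (ℕ → V) → V)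
    (X : ℕ → V) (i l : ℕ) : V :=
  sgn (((a₁ : ℤ) - 1) * (i : ℤ) + ((a₂ : ℤ) - 1) * (l : ℤ)) •
    K₃ (insSeq a₂ l (K₂ (shiftSeq (insSeq a₁ i (K₁ (shiftSeq X i)) X) l))
      (insSeq a₁ i (K₁ (shiftSeq X i)) X))

/-- the key one-term symmetry for disjoint insertions -/
lemma dbl_swap {a₁ a₂ : ℕ} {K₁ K₂ K₃ : (ℕ → V) → V} (h₁ : IsML0 𝕂 a₁ K₁)
    (X : ℕ → V) {i l : ℕ} (hil : i < l) :
    dbl a₁ a₂ K₁ K₂ K₃ X i l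
      = sgn (((a₁ : ℤ) - 1) * ((a₂ : ℤ) - 1)) •
        dbl a₂ a₁ K₂ K₁ K₃ X (l + a₁ - 1) i := by
  unfold dbl
  have e1 : shiftSeq (insSeq a₁ i (K₁ (shiftSeq X i)) X) l = shiftSeq X (l + a₁ - 1) := by
    funext m
    show insSeq a₁ i (K₁ (shiftSeq X i)) X (m + l) = X (m + (l + a₁ - 1))
    rw [insSeq_gt (show i < m + l by omega)]
    congr 1; omega
  have e2 : K₁ (shiftSeq (insSeq a₂ (l + a₁ - 1) (K₂ (shiftSeq X (l + a₁ - 1))) X) i)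
      = K₁ (shiftSeq X i) := by
    refine h₁.1 _ _ (fun j hj => ?_)
    show insSeq a₂ (l + a₁ - 1) _ X (j + i) = X (j + i)
    exact insSeq_lt (by omega)
  rw [e1, e2, ins_ins_disjoint hil]
  rw [smul_smul, ← sgn_add]
  congr 1
  apply sgn_congr (-(((a₁ : ℤ) - 1) * ((a₂ : ℤ) - 1)))
  have hc : ((l + a₁ - 1 : ℕ) : ℤ) = (l : ℤ) + (a₁ : ℤ) - 1 := by
    have : 1 ≤ l + a₁ := by omega
    push_cast [Nat.cast_sub this]
    ring
  rw [hc]; ring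

/-- middle part of the split: insertions of `K₁` inside the block of `K₂` -/
lemma dbl_mid {a₁ a₂ a₃ : ℕ} {K₁ K₂ K₃ : (ℕ → V) → V} (h₃ : IsML0 𝕂 a₃ K₃)
    (X : ℕ → V) {l : ℕ} (hl : l < a₃) :
    ∑ i ∈ Finset.Ico l (l + a₂), dbl a₁ a₂ K₁ K₂ K₃ X i l
      = sgn ((((a₁ + a₂ - 1 : ℕ) : ℤ) - 1) * (l : ℤ)) •
        K₃ (insSeq (a₁ + a₂ - 1) l (jop0 a₁ a₂ K₁ K₂ (shiftSeq X l)) X) := by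
  rcases Nat.eq_zero_or_pos a₂ with rfl | ha₂
  · simp only [Nat.add_zero, Finset.Ico_self, Finset.sum_empty]
    have : jop0 a₁ 0 K₁ K₂ (shiftSeq X l) = 0 := by simp [jop0]
    rw [this, ml_insSeq h₃ X hl, map_zero, smul_zero]
  · rw [Finset.sum_Ico_eq_sum_range, show l + a₂ - l = a₂ from by omega]
    rw [show jop0 a₁ a₂ K₁ K₂ (shiftSeq X l)
        = ∑ r ∈ Finset.range a₂, sgn (((a₁ : ℤ) - 1) * (r : ℤ)) •
          K₂ (insSeq a₁ r (K₁ (shiftSeq (shiftSeq X l) r)) (shiftSeq X l)) from rfl]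
    rw [ml_insSeq h₃ X hl, map_sum, Finset.smul_sum]
    refine Finset.sum_congr rfl fun r hr => ?_
    have hr' := mem_range.mp hr
    rw [map_zsmul, ← ml_insSeq h₃ X hl]
    unfold dbl
    rw [shift_ins_ge (show l ≤ l + r by omega), show l + r - l = r from by omega,
      shiftSeq_shiftSeq, show r + l = l + r from by omega,
      ins_ins_mid hr']
    rw [smul_smul (sgn _) (sgn _), ← sgn_add]
    congr 1
    apply sgn_congr 0
    have hc : ((a₁ + a₂ - 1 : ℕ) : ℤ) = (a₁ : ℤ) + (a₂ : ℤ) - 1 := by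
      have : 1 ≤ a₁ + a₂ := by omega
      push_cast [Nat.cast_sub this]
      ring
    rw [hc]; push_cast; ring

/-- splitting `j(K₁)(j(K₂)K₃)` into the nested part plus disjoint parts -/
lemma jop_split {a₁ a₂ a₃ : ℕ} {K₁ K₂ K₃ : (ℕ → V) → V} (h₃ : IsML0 𝕂 a₃ K₃)
    (X : ℕ → V) :
    jop0 a₁ (a₂ + a₃ - 1) K₁ (jop0 a₂ a₃ K₂ K₃) X
      = jop0 (a₁ + a₂ - 1) a₃ (jop0 a₁ a₂ K₁ K₂) K₃ X
        + (∑ l ∈ Finset.range a₃, ∑ i ∈ Finset.range l, dbl a₁ a₂ K₁ K₂ K₃ X i l)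
        + (∑ l ∈ Finset.range a₃, ∑ i ∈ Finset.Ico (l + a₂) (a₂ + a₃ - 1),
            dbl a₁ a₂ K₁ K₂ K₃ X i l) := by
  have step1 : jop0 a₁ (a₂ + a₃ - 1) K₁ (jop0 a₂ a₃ K₂ K₃) X
      = ∑ i ∈ Finset.range (a₂ + a₃ - 1), ∑ l ∈ Finset.range a₃,
          dbl a₁ a₂ K₁ K₂ K₃ X i l := by
    rw [show jop0 a₁ (a₂ + a₃ - 1) K₁ (jop0 a₂ a₃ K₂ K₃) X
        = ∑ i ∈ Finset.range (a₂ + a₃ - 1), sgn (((a₁ : ℤ) - 1) * (i : ℤ)) •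
            jop0 a₂ a₃ K₂ K₃ (insSeq a₁ i (K₁ (shiftSeq X i)) X) from rfl]
    refine Finset.sum_congr rfl fun i _ => ?_
    rw [show jop0 a₂ a₃ K₂ K₃ (insSeq a₁ i (K₁ (shiftSeq X i)) X)
        = ∑ l ∈ Finset.range a₃, sgn (((a₂ : ℤ) - 1) * (l : ℤ)) •
            K₃ (insSeq a₂ l (K₂ (shiftSeq (insSeq a₁ i (K₁ (shiftSeq X i)) X) l))
              (insSeq a₁ i (K₁ (shiftSeq X i)) X)) from rfl]
    rw [Finset.smul_sum]
    refine Finset.sum_congr rfl fun l _ => ?_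
    rw [smul_smul, ← sgn_add]
    rfl
  rw [step1, Finset.sum_comm]
  have step2 : ∀ l ∈ Finset.range a₃,
      ∑ i ∈ Finset.range (a₂ + a₃ - 1), dbl a₁ a₂ K₁ K₂ K₃ X i l
        = (sgn ((((a₁ + a₂ - 1 : ℕ) : ℤ) - 1) * (l : ℤ)) •
            K₃ (insSeq (a₁ + a₂ - 1) l (jop0 a₁ a₂ K₁ K₂ (shiftSeq X l)) X)
          + ∑ i ∈ Finset.range l, dbl a₁ a₂ K₁ K₂ K₃ X i l)
          + ∑ i ∈ Finset.Ico (l + a₂) (a₂ + a₃ - 1), dbl a₁ a₂ K₁ K₂ K₃ X i l := by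
    intro l hl
    have hl' := mem_range.mp hl
    rw [Finset.range_eq_Ico,
      ← Finset.sum_Ico_consecutive _ (show 0 ≤ l + a₂ by omega)
        (show l + a₂ ≤ a₂ + a₃ - 1 by omega),
      ← Finset.sum_Ico_consecutive _ (show 0 ≤ l by omega) (show l ≤ l + a₂ by omega),
      ← Finset.range_eq_Ico, dbl_mid h₃ X hl']
    ring_nf
    abel
  rw [Finset.sum_congr rfl step2, Finset.sum_add_distrib, Finset.sum_add_distrib]
  rw [show jop0 (a₁ + a₂ - 1) a₃ (jop0 a₁ a₂ K₁ K₂) K₃ X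
      = ∑ l ∈ Finset.range a₃, sgn ((((a₁ + a₂ - 1 : ℕ) : ℤ) - 1) * (l : ℤ)) •
          K₃ (insSeq (a₁ + a₂ - 1) l (jop0 a₁ a₂ K₁ K₂ (shiftSeq X l)) X) from rfl]

/-- the disjoint parts swap, with sign -/
lemma swapBC {a₁ a₂ a₃ : ℕ} {K₁ K₂ K₃ : (ℕ → V) → V} (h₁ : IsML0 𝕂 a₁ K₁)
    (X : ℕ → V) :
    ∑ l ∈ Finset.range a₃, ∑ i ∈ Finset.range l, dbl a₁ a₂ K₁ K₂ K₃ X i l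
      = sgn (((a₁ : ℤ) - 1) * ((a₂ : ℤ) - 1)) •
        ∑ l ∈ Finset.range a₃, ∑ i ∈ Finset.Ico (l + a₁) (a₁ + a₃ - 1),
          dbl a₂ a₁ K₂ K₁ K₃ X i l := by
  rw [Finset.smul_sum]
  rw [Finset.sum_comm' (s := Finset.range a₃) (t := fun l => Finset.range l)
    (t' := Finset.range a₃) (s' := fun i => Finset.Ico (i + 1) a₃)
    (h := by intro l i; simp only [mem_range, mem_Ico]; omega)]
  refine Finset.sum_congr rfl fun l hl => ?_
  have hl' := mem_range.mp hl
  rw [Finset.smul_sum]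
  rw [Finset.sum_Ico_eq_sum_range, Finset.sum_Ico_eq_sum_range]
  rw [show a₁ + a₃ - 1 - (l + a₁) = a₃ - (l + 1) from by omega]
  refine Finset.sum_congr rfl fun d hd => ?_
  have hd' := mem_range.mp hd
  rw [show l + a₁ + d = (l + 1 + d) + a₁ - 1 from by omega]
  exact dbl_swap h₁ X (show l < l + 1 + d by omega)

/-- the graded pre-Lie (associator symmetry) identity -/
lemma assoc {a₁ a₂ a₃ : ℕ} {K₁ K₂ K₃ : (ℕ → V) → V} (h₁ : IsML0 𝕂 a₁ K₁)
    (h₂ : IsML0 𝕂 a₂ K₂) (h₃ : IsML0 𝕂 a₃ K₃) (X : ℕ → V) :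
    jop0 a₁ (a₂ + a₃ - 1) K₁ (jop0 a₂ a₃ K₂ K₃) X
      - jop0 (a₁ + a₂ - 1) a₃ (jop0 a₁ a₂ K₁ K₂) K₃ X
    = sgn (((a₁ : ℤ) - 1) * ((a₂ : ℤ) - 1)) •
      (jop0 a₂ (a₁ + a₃ - 1) K₂ (jop0 a₁ a₃ K₁ K₃) X
        - jop0 (a₂ + a₁ - 1) a₃ (jop0 a₂ a₁ K₂ K₁) K₃ X) := by
  have hsplit₁ := jop_split (a₁ := a₁) (a₂ := a₂) (K₁ := K₁) (K₂ := K₂) h₃ X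
  have hsplit₂ := jop_split (a₁ := a₂) (a₂ := a₁) (K₁ := K₂) (K₂ := K₁) h₃ X
  have hswap₁ := swapBC (a₂ := a₂) (a₃ := a₃) (K₂ := K₂) (K₃ := K₃) h₁ X
  have hswap₂ := swapBC (a₂ := a₁) (a₃ := a₃) (K₂ := K₁) (K₃ := K₃) h₂ X
  rw [hsplit₁, hsplit₂, hswap₁, hswap₂]
  rw [show ((a₂ : ℤ) - 1) * ((a₁ : ℤ) - 1) = ((a₁ : ℤ) - 1) * ((a₂ : ℤ) - 1) from
    mul_comm _ _]
  set e := sgn (((a₁ : ℤ) - 1) * ((a₂ : ℤ) - 1)) with he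
  have hee : e * e = 1 := sgn_mul_self _
  set A := ∑ l ∈ Finset.range a₃, ∑ i ∈ Finset.Ico (l + a₁) (a₁ + a₃ - 1),
    dbl a₂ a₁ K₂ K₁ K₃ X i l
  set B := ∑ l ∈ Finset.range a₃, ∑ i ∈ Finset.Ico (l + a₂) (a₂ + a₃ - 1),
    dbl a₁ a₂ K₁ K₂ K₃ X i l
  set C := jop0 (a₁ + a₂ - 1) a₃ (jop0 a₁ a₂ K₁ K₂) K₃ X
  set D := jop0 (a₂ + a₁ - 1) a₃ (jop0 a₂ a₁ K₂ K₁) K₃ X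
  have : e • (e • B) = B := by rw [smul_smul, hee, one_smul]
  calc C + e • A + B - C = e • A + B := by abel
    _ = e • (D + e • B + A - D) := by
        rw [smul_sub, smul_add, smul_add, this]; abel



lemma shiftSeq_update_lt {β : Type*} {m i : ℕ} (h : m < i) (f : ℕ → β) (u : β) :
    shiftSeq (Function.update f m u) i = shiftSeq f i := by
  funext j
  simp only [shiftSeq]
  rw [Function.update_of_ne (by omega)]

lemma shiftSeq_update_ge {β : Type*} [DecidableEq ℕ] {m i : ℕ} (h : i ≤ m) (f : ℕ → β) (u : β) :
    shiftSeq (Function.update f m u) i = Function.update (shiftSeq f i) (m - i) u := by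
  funext j
  simp only [shiftSeq]
  rcases eq_or_ne j (m - i) with rfl | hj
  · rw [Function.update_self, show m - i + i = m by omega, Function.update_self]
  · rw [Function.update_of_ne (by omega), Function.update_of_ne hj]
    rfl

lemma insSeq_update_lt {β : Type*} {m i : ℕ} (h : m < i) (a : ℕ) (c : β) (f : ℕ → β) (u : β) :
    insSeq a i c (Function.update f m u) = Function.update (insSeq a i c f) m u := by
  funext l
  rcases eq_or_ne l m with rfl | hl
  · rw [Function.update_self, insSeq_lt h, Function.update_self]
  · rw [Function.update_of_ne hl]
    rcases lt_trichotomy l i with h' | rfl | h'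
    · rw [insSeq_lt h', insSeq_lt h', Function.update_of_ne hl]
    · rw [insSeq_self, insSeq_self]
    · rw [insSeq_gt h', insSeq_gt h', Function.update_of_ne (by omega)]

lemma insSeq_update_mid {β : Type*} {m i a : ℕ} (h1 : i ≤ m) (h2 : m < i + a)
    (c : β) (f : ℕ → β) (u : β) :
    insSeq a i c (Function.update f m u) = insSeq a i c f := by
  funext l
  rcases lt_trichotomy l i with h' | rfl | h'
  · rw [insSeq_lt h', insSeq_lt h', Function.update_of_ne (by omega)]
  · rw [insSeq_self, insSeq_self]
  · rw [insSeq_gt h', insSeq_gt h', Function.update_of_ne (by omega)]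

lemma insSeq_update_high {β : Type*} {m i a : ℕ} (h : i + a ≤ m)
    (c : β) (f : ℕ → β) (u : β) :
    insSeq a i c (Function.update f m u)
      = Function.update (insSeq a i c f) (m - a + 1) u := by
  funext l
  rcases lt_trichotomy l i with h' | rfl | h'
  · rw [insSeq_lt h', Function.update_of_ne (show l ≠ m by omega),
      Function.update_of_ne (show l ≠ m - a + 1 by omega), insSeq_lt h']
  · rw [insSeq_self, Function.update_of_ne (by omega), insSeq_self]
  · rcases eq_or_ne l (m - a + 1) with rfl | hl
    · rw [insSeq_gt h', Function.update_self,
        show m - a + 1 + a - 1 = m by omega, Function.update_self]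
    · rw [insSeq_gt h', Function.update_of_ne hl, insSeq_gt h',
        Function.update_of_ne (by omega)]

/-! ### closure lemmas for IsML0 -/

lemma isML0_zsmul_sum {a : ℕ} {ι : Type*} (s : Finset ι) (c : ι → ℤ)
    (F : ι → (ℕ → V) → V) (hF : ∀ i ∈ s, IsML0 𝕂 a (F i)) :
    IsML0 𝕂 a (fun X => ∑ i ∈ s, c i • F i X) := by
  constructor
  · intro X X' hXX'
    exact Finset.sum_congr rfl fun i hi => by rw [(hF i hi).1 X X' hXX']
  · intro X m hm
    constructor
    · intro u v
      rw [← Finset.sum_add_distrib]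
      refine Finset.sum_congr rfl fun i hi => ?_
      rw [((hF i hi).2 X m hm).1 u v, smul_add]
    · intro r u
      rw [Finset.smul_sum]
      refine Finset.sum_congr rfl fun i hi => ?_
      rw [((hF i hi).2 X m hm).2 r u, smul_comm]

lemma isML0_sub_smul {a : ℕ} {F G : (ℕ → V) → V} (c : ℤ)
    (hF : IsML0 𝕂 a F) (hG : IsML0 𝕂 a G) :
    IsML0 𝕂 a (fun X => F X - c • G X) := by
  constructor
  · intro X X' h
    dsimp only
    rw [hF.1 X X' h, hG.1 X X' h]
  · intro X m hm
    constructor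
    · intro u v
      dsimp only
      rw [(hF.2 X m hm).1 u v, (hG.2 X m hm).1 u v]
      rw [smul_add]; abel
    · intro r u
      dsimp only
      rw [(hF.2 X m hm).2 r u, (hG.2 X m hm).2 r u, smul_sub, smul_comm]

/-! ### each jop0 summand is multilinear -/

lemma isML0_jterm {a₁ a₂ : ℕ} {K₁ K₂ : (ℕ → V) → V}
    (h₁ : IsML0 𝕂 a₁ K₁) (h₂ : IsML0 𝕂 a₂ K₂) {i : ℕ} (hi : i < a₂) :
    IsML0 𝕂 (a₁ + a₂ - 1) (fun X => K₂ (insSeq a₁ i (K₁ (shiftSeq X i)) X)) := by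
  constructor
  · intro X X' hXX'
    have hv : K₁ (shiftSeq X i) = K₁ (shiftSeq X' i) :=
      h₁.1 _ _ (fun j hj => hXX' (j + i) (by omega))
    dsimp only
    rw [hv]
    refine h₂.1 _ _ (fun j hj => ?_)
    rcases lt_trichotomy j i with h' | rfl | h'
    · rw [insSeq_lt h', insSeq_lt h']; exact hXX' j (by omega)
    · rw [insSeq_self, insSeq_self]
    · rw [insSeq_gt h', insSeq_gt h']; exact hXX' (j + a₁ - 1) (by omega)
  · intro X m hm
    rcases lt_or_ge m i with hmi | hmi
    · -- m < i : update passes through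
      have hma : m < a₂ := by omega
      have hres : ∀ u, K₂ (insSeq a₁ i (K₁ (shiftSeq (Function.update X m u) i))
            (Function.update X m u))
          = K₂ (Function.update (insSeq a₁ i (K₁ (shiftSeq X i)) X) m u) := by
        intro u
        rw [shiftSeq_update_lt hmi, insSeq_update_lt hmi]
      constructor
      · intro u v; dsimp only; rw [hres, hres, hres]; exact (h₂.2 _ m hma).1 u v
      · intro r u; dsimp only; rw [hres, hres]; exact (h₂.2 _ m hma).2 r u
    · rcases lt_or_ge m (i + a₁) with hmlt | hmge
      · -- middle : update hits the K₁ block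
        have hlt : m - i < a₁ := by omega
        have hres : ∀ u, K₂ (insSeq a₁ i (K₁ (shiftSeq (Function.update X m u) i))
              (Function.update X m u))
            = K₂ (Function.update (insSeq a₁ i (K₁ (shiftSeq X i)) X) i
                (K₁ (Function.update (shiftSeq X i) (m - i) u))) := by
          intro u
          rw [shiftSeq_update_ge hmi, insSeq_update_mid hmi hmlt,
            ← insSeq_update a₁ i _ (K₁ (shiftSeq X i))]
        constructor
        · intro u v
          dsimp only
          rw [hres, hres, hres, (h₁.2 _ (m - i) hlt).1 u v, (h₂.2 _ i hi).1]
        · intro r u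
          dsimp only
          rw [hres, hres, (h₁.2 _ (m - i) hlt).2 r u, (h₂.2 _ i hi).2]
      · -- high : update passes through to slot m - a₁ + 1
        have hma : m - a₁ + 1 < a₂ := by omega
        have hres : ∀ u, K₂ (insSeq a₁ i (K₁ (shiftSeq (Function.update X m u) i))
              (Function.update X m u))
            = K₂ (Function.update (insSeq a₁ i (K₁ (shiftSeq X i)) X) (m - a₁ + 1) u) := by
          intro u
          have hv : K₁ (shiftSeq (Function.update X m u) i) = K₁ (shiftSeq X i) := by
            refine h₁.1 _ _ (fun j hj => ?_)
            simp only [shiftSeq]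
            rw [Function.update_of_ne (by omega)]
          rw [hv, insSeq_update_high (by omega)]
        constructor
        · intro u v; dsimp only; rw [hres, hres, hres]; exact (h₂.2 _ _ hma).1 u v
        · intro r u; dsimp only; rw [hres, hres]; exact (h₂.2 _ _ hma).2 r u


lemma isML0_jop0 {a₁ a₂ : ℕ} {K₁ K₂ : (ℕ → V) → V}
    (h₁ : IsML0 𝕂 a₁ K₁) (h₂ : IsML0 𝕂 a₂ K₂) :
    IsML0 𝕂 (a₁ + a₂ - 1) (jop0 a₁ a₂ K₁ K₂) :=
  isML0_zsmul_sum (Finset.range a₂) (fun i => sgn (((a₁ : ℤ) - 1) * (i : ℤ)))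
    (fun i X => K₂ (insSeq a₁ i (K₁ (shiftSeq X i)) X))
    (fun i hi => isML0_jterm h₁ h₂ (mem_range.mp hi))

lemma brD0_eq (a₁ a₂ : ℕ) (K₁ K₂ : (ℕ → V) → V) :
    brD0 a₁ a₂ K₁ K₂ = fun X => jop0 a₁ a₂ K₁ K₂ X
      - sgn (((a₁ : ℤ) - 1) * ((a₂ : ℤ) - 1)) • jop0 a₂ a₁ K₂ K₁ X := rfl

lemma norm_gen {s t : ℤ} {x : V} (b c : ℕ) (hx : b + c = 0 → x = 0)
    (ht : b + c ≠ 0 → s = t) : s • x = t • x := by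
  by_cases h : b + c = 0
  · rw [hx h, smul_zero, smul_zero]
  · rw [ht h]

/-- `(M(V), [·,·]^Δ)` is a `1`-graded (`ℤ`-graded) Lie algebra:
the bracket of a `(k₁+1)`-linear and a `(k₂+1)`-linear map is `(k₁+k₂+1)`-linear,
it is graded anticommutative, and it satisfies the graded Jacobi identity
`[K₁,[K₂,K₃]^Δ]^Δ = [[K₁,K₂]^Δ,K₃]^Δ + (−1)^{k₁k₂}[K₂,[K₁,K₃]^Δ]^Δ`
(arities: `aᵢ = kᵢ + 1`). -/
theorem stmt1 (a₁ a₂ a₃ : ℕ) (K₁ K₂ K₃ : (ℕ → V) → V)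
    (h₁ : IsML0 𝕂 a₁ K₁) (h₂ : IsML0 𝕂 a₂ K₂) (h₃ : IsML0 𝕂 a₃ K₃) :
    IsML0 𝕂 (a₁ + a₂ - 1) (brD0 a₁ a₂ K₁ K₂) ∧
    brD0 a₁ a₂ K₁ K₂
      = (fun X => - (sgn (((a₁ : ℤ) - 1) * ((a₂ : ℤ) - 1)) • brD0 a₂ a₁ K₂ K₁ X)) ∧
    brD0 a₁ (a₂ + a₃ - 1) K₁ (brD0 a₂ a₃ K₂ K₃)
      = (fun X => brD0 (a₁ + a₂ - 1) a₃ (brD0 a₁ a₂ K₁ K₂) K₃ X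
          + sgn (((a₁ : ℤ) - 1) * ((a₂ : ℤ) - 1)) •
            brD0 a₂ (a₁ + a₃ - 1) K₂ (brD0 a₁ a₃ K₁ K₃) X) := by
  refine ⟨?_, ?_, ?_⟩
  · -- multilinearity of the bracket
    have hj₁ := isML0_jop0 h₁ h₂
    have hj₂ := isML0_jop0 h₂ h₁
    rw [Nat.add_comm a₂ a₁] at hj₂
    exact isML0_sub_smul _ hj₁ hj₂
  · -- graded anticommutativity
    funext X
    simp only [brD0]
    rw [show ((a₂ : ℤ) - 1) * ((a₁ : ℤ) - 1) = ((a₁ : ℤ) - 1) * ((a₂ : ℤ) - 1) from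
      mul_comm _ _]
    have hee := sgn_mul_self (((a₁ : ℤ) - 1) * ((a₂ : ℤ) - 1))
    match_scalars <;>
      first
        | ring1
        | linear_combination -hee
        | linear_combination hee
  · -- graded Jacobi identity
    funext X
    simp only [brD0_eq]
    rw [jop0_sub_smul_right a₁ (a₂ + a₃ - 1) K₁ (jop0 a₂ a₃ K₂ K₃) (jop0 a₃ a₂ K₃ K₂)
        (sgn (((a₂ : ℤ) - 1) * ((a₃ : ℤ) - 1))) X,
      jop0_sub_smul_left h₁ (a₂ + a₃ - 1) (jop0 a₂ a₃ K₂ K₃) (jop0 a₃ a₂ K₃ K₂)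
        (sgn (((a₂ : ℤ) - 1) * ((a₃ : ℤ) - 1))) X,
      jop0_sub_smul_left h₃ (a₁ + a₂ - 1) (jop0 a₁ a₂ K₁ K₂) (jop0 a₂ a₁ K₂ K₁)
        (sgn (((a₁ : ℤ) - 1) * ((a₂ : ℤ) - 1))) X,
      jop0_sub_smul_right a₃ (a₁ + a₂ - 1) K₃ (jop0 a₁ a₂ K₁ K₂) (jop0 a₂ a₁ K₂ K₁)
        (sgn (((a₁ : ℤ) - 1) * ((a₂ : ℤ) - 1))) X,
      jop0_sub_smul_right a₂ (a₁ + a₃ - 1) K₂ (jop0 a₁ a₃ K₁ K₃) (jop0 a₃ a₁ K₃ K₁)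
        (sgn (((a₁ : ℤ) - 1) * ((a₃ : ℤ) - 1))) X,
      jop0_sub_smul_left h₂ (a₁ + a₃ - 1) (jop0 a₁ a₃ K₁ K₃) (jop0 a₃ a₁ K₃ K₁)
        (sgn (((a₁ : ℤ) - 1) * ((a₃ : ℤ) - 1))) X]
    -- normalize the three degree-cast signs
    have hQz : a₂ + a₃ = 0 →
        (jop0 (a₂ + a₃ - 1) a₁ (jop0 a₂ a₃ K₂ K₃) K₁ X
          - sgn (((a₂ : ℤ) - 1) * ((a₃ : ℤ) - 1)) •
            jop0 (a₂ + a₃ - 1) a₁ (jop0 a₃ a₂ K₃ K₂) K₁ X) = 0 := by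
      intro h
      have h2 : a₂ = 0 := by omega
      have h3 : a₃ = 0 := by omega
      subst h2; subst h3
      rw [show jop0 0 0 K₂ K₃ = (fun _ => (0 : V)) from by funext Y; simp [jop0],
        show jop0 0 0 K₃ K₂ = (fun _ => (0 : V)) from by funext Y; simp [jop0],
        jop0_zero_left h₁]
      simp
    have hSz : a₁ + a₂ = 0 →
        (jop0 a₃ (a₁ + a₂ - 1) K₃ (jop0 a₁ a₂ K₁ K₂) X
          - sgn (((a₁ : ℤ) - 1) * ((a₂ : ℤ) - 1)) •
            jop0 a₃ (a₁ + a₂ - 1) K₃ (jop0 a₂ a₁ K₂ K₁) X) = 0 := by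
      intro h
      have h1 : a₁ = 0 := by omega
      have h2 : a₂ = 0 := by omega
      subst h1; subst h2
      rw [show jop0 0 0 K₁ K₂ = (fun _ => (0 : V)) from by funext Y; simp [jop0],
        show jop0 0 0 K₂ K₁ = (fun _ => (0 : V)) from by funext Y; simp [jop0],
        jop0_zero_right]
      simp
    have hWz : a₁ + a₃ = 0 →
        (jop0 (a₁ + a₃ - 1) a₂ (jop0 a₁ a₃ K₁ K₃) K₂ X
          - sgn (((a₁ : ℤ) - 1) * ((a₃ : ℤ) - 1)) •
            jop0 (a₁ + a₃ - 1) a₂ (jop0 a₃ a₁ K₃ K₁) K₂ X) = 0 := by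
      intro h
      have h1 : a₁ = 0 := by omega
      have h3 : a₃ = 0 := by omega
      subst h1; subst h3
      rw [show jop0 0 0 K₁ K₃ = (fun _ => (0 : V)) from by funext Y; simp [jop0],
        show jop0 0 0 K₃ K₁ = (fun _ => (0 : V)) from by funext Y; simp [jop0],
        jop0_zero_left h₂]
      simp
    have htQ : a₂ + a₃ ≠ 0 →
        sgn (((a₁ : ℤ) - 1) * (((a₂ + a₃ - 1 : ℕ) : ℤ) - 1))
          = sgn (((a₁ : ℤ) - 1) * ((a₂ : ℤ) - 1)) * sgn (((a₁ : ℤ) - 1) * ((a₃ : ℤ) - 1)) := by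
      intro h
      rw [show ((a₁ : ℤ) - 1) * (((a₂ + a₃ - 1 : ℕ) : ℤ) - 1)
          = ((a₁ : ℤ) - 1) * ((a₂ : ℤ) - 1) + ((a₁ : ℤ) - 1) * ((a₃ : ℤ) - 1) from by
        rw [Nat.cast_sub (by omega : 1 ≤ a₂ + a₃)]; push_cast; ring, sgn_add]
    have htS : a₁ + a₂ ≠ 0 →
        sgn ((((a₁ + a₂ - 1 : ℕ) : ℤ) - 1) * ((a₃ : ℤ) - 1))
          = sgn (((a₁ : ℤ) - 1) * ((a₃ : ℤ) - 1)) * sgn (((a₂ : ℤ) - 1) * ((a₃ : ℤ) - 1)) := by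
      intro h
      rw [show (((a₁ + a₂ - 1 : ℕ) : ℤ) - 1) * ((a₃ : ℤ) - 1)
          = ((a₁ : ℤ) - 1) * ((a₃ : ℤ) - 1) + ((a₂ : ℤ) - 1) * ((a₃ : ℤ) - 1) from by
        rw [Nat.cast_sub (by omega : 1 ≤ a₁ + a₂)]; push_cast; ring, sgn_add]
    have htW : a₁ + a₃ ≠ 0 →
        sgn (((a₂ : ℤ) - 1) * (((a₁ + a₃ - 1 : ℕ) : ℤ) - 1))
          = sgn (((a₁ : ℤ) - 1) * ((a₂ : ℤ) - 1)) * sgn (((a₂ : ℤ) - 1) * ((a₃ : ℤ) - 1)) := by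
      intro h
      rw [show ((a₂ : ℤ) - 1) * (((a₁ + a₃ - 1 : ℕ) : ℤ) - 1)
          = ((a₁ : ℤ) - 1) * ((a₂ : ℤ) - 1) + ((a₂ : ℤ) - 1) * ((a₃ : ℤ) - 1) from by
        rw [Nat.cast_sub (by omega : 1 ≤ a₁ + a₃)]; push_cast; ring, sgn_add]
    rw [norm_gen a₂ a₃ hQz htQ, norm_gen a₁ a₂ hSz htS, norm_gen a₁ a₃ hWz htW]
    -- the three associator identities
    have hA := assoc h₁ h₂ h₃ X
    rw [Nat.add_comm a₂ a₁] at hA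
    have hB := assoc h₁ h₃ h₂ X
    rw [Nat.add_comm a₃ a₂, Nat.add_comm a₃ a₁] at hB
    have hC := assoc h₂ h₃ h₁ X
    rw [Nat.add_comm a₃ a₁, Nat.add_comm a₂ a₁, Nat.add_comm a₃ a₂] at hC
    rw [sub_eq_iff_eq_add.mp hA, sub_eq_iff_eq_add.mp hB, sub_eq_iff_eq_add.mp hC]
    have hee12 := sgn_mul_self (((a₁ : ℤ) - 1) * ((a₂ : ℤ) - 1))
    match_scalars <;>
      first
        | ring1
        | linear_combination (sgn (((a₂ : ℤ) - 1) * ((a₃ : ℤ) - 1))) * hee12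
        | linear_combination (-sgn (((a₂ : ℤ) - 1) * ((a₃ : ℤ) - 1))) * hee12
        | linear_combination
            (sgn (((a₂ : ℤ) - 1) * ((a₃ : ℤ) - 1)) * sgn (((a₁ : ℤ) - 1) * ((a₃ : ℤ) - 1)))
              * hee12
        | linear_combination
            (-(sgn (((a₂ : ℤ) - 1) * ((a₃ : ℤ) - 1)) * sgn (((a₁ : ℤ) - 1) * ((a₃ : ℤ) - 1))))
              * hee12


end NR
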